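/- arXiv:2010.09091 — 2 statements merged into one kernel-verified Lean document; each statement's English description precedes it below -/
import Mathlib

section
/- For all integers k ≥ 4 and all integers m, n ≥ 0 with m+2n ≥ 3, there exists an (m,n)-coloured mixed graph H on exactly t = k²·(m+2n)^{k+1} vertices that has Property P_{i, (k-i)(k-1)+1} for every i = 1, 2, …, k. -/
/-- The possible "adjacency types" between an ordered pair of adjacent vertices in an
`(m,n)`-coloured mixed graph: an edge of one of `m` colours, an arc (of one of `n` colours)
from the first vertex to the second, or an arc from the second vertex to the first. -/
inductive AdjType (m n : ℕ) : Type where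
  | edge : Fin m → AdjType m n
  | fwd  : Fin n → AdjType m n
  | bwd  : Fin n → AdjType m n
  deriving DecidableEq

/-- Reversing the roles of the two vertices flips an adjacency type. -/
def AdjType.flip {m n : ℕ} : AdjType m n → AdjType m n
  | .edge i => .edge i
  | .fwd j => .bwd j
  | .bwd j => .fwd j

theorem AdjType.flip_flip {m n : ℕ} (t : AdjType m n) : t.flip.flip = t := by
  cases t <;> rfl

/-- An `(m,n)`-coloured mixed graph on vertex type `V`: any two distinct vertices are joined by
at most one edge (with one of `m` colours) or one arc (with one of `n` colours and a direction),
recorded by `typ x y`, the adjacency type of the ordered pair `(x, y)`. -/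
structure MixedGraph (V : Type) (m n : ℕ) : Type where
  typ : V → V → Option (AdjType m n)
  typ_irrefl : ∀ v, typ v v = none
  typ_flip : ∀ u v, typ u v = (typ v u).map AdjType.flip

namespace MixedGraph

variable {V W : Type} {m n : ℕ}

/-- Adjacency in (the underlying undirected graph of) a mixed graph. -/
def Adj (G : MixedGraph V m n) (u v : V) : Prop := (G.typ u v).isSome

/-- The degree of a vertex in the underlying undirected graph. -/
noncomputable def degree [Fintype V] (G : MixedGraph V m n) (v : V) : ℕ :=
  {u | G.Adj v u}.ncard

/-- The maximum degree of the underlying undirected graph. -/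
noncomputable def maxDegree [Fintype V] (G : MixedGraph V m n) : ℕ :=
  Finset.univ.sup G.degree

/-- The underlying (simple, undirected) graph of a mixed graph. -/
def toSimpleGraph (G : MixedGraph V m n) : SimpleGraph V where
  Adj u v := G.Adj u v
  symm := by
    constructor
    intro u v h
    unfold MixedGraph.Adj at *
    rw [G.typ_flip] at h
    simpa using h
  loopless := by
    constructor
    intro v h
    unfold MixedGraph.Adj at h
    rw [G.typ_irrefl] at h
    simp at h

/-- Property `P_{a,b}`: for every set `X` of at most `a` pairwise adjacent vertices and every
assignment `L` of adjacency types to the vertices of `X`, at least `b` vertices `x` satisfy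
`typ x v = L v` for all `v ∈ X`. -/
def HasPropP [Fintype V] (G : MixedGraph V m n) (a b : ℕ) : Prop :=
  ∀ X : Finset V, X.card ≤ a →
    (∀ u ∈ X, ∀ v ∈ X, u ≠ v → G.Adj u v) →
    ∀ L : {v : V // v ∈ X} → AdjType m n,
      b ≤ {x : V | ∀ v : {v : V // v ∈ X}, G.typ x v = some (L v)}.ncard

end MixedGraph

/-- A homomorphism of `(m,n)`-coloured mixed graphs: it preserves edges together with their
colours, and arcs together with their colours and orientations. -/
def IsMixedHom {V W : Type} {m n : ℕ} (G : MixedGraph V m n) (H : MixedGraph W m n)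
    (f : V → W) : Prop :=
  ∀ u v (t : AdjType m n), G.typ u v = some t → H.typ (f u) (f v) = some t

/-- `H` is `k`-hom-universal if every finite `(m,n)`-coloured mixed graph of maximum degree
at most `k` admits a homomorphism to `H`. -/
def KHomUniversal {W : Type} {m n : ℕ} (H : MixedGraph W m n) (k : ℕ) : Prop :=
  ∀ (V : Type) (_ : Fintype V) (G : MixedGraph V m n),
    (∀ v, G.degree v ≤ k) → ∃ f : V → W, IsMixedHom G H f

/-- The `(m,n)`-coloured mixed chromatic number: the least `k` such that `G` has a homomorphism
to some `(m,n)`-coloured mixed graph on `k` vertices. -/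
noncomputable def mixedChromNum {V : Type} {m n : ℕ} (G : MixedGraph V m n) : ℕ :=
  sInf {k : ℕ | ∃ H : MixedGraph (Fin k) m n, ∃ f : V → Fin k, IsMixedHom G H f}

/-- A Latin square, encoding a 1-factorization of `K_{c,c}`: `F s t` is the index of the
1-factor containing the edge joining `a_s ∈ A` and `b_t ∈ B`. -/
def IsLatin {c : ℕ} (F : Fin c → Fin c → Fin c) : Prop :=
  (∀ s, Function.Bijective (F s)) ∧ (∀ t, Function.Bijective fun s => F s t)

/-- The adjacency type assigned to the `k`-th `1`-factor (from `A` to `B`): an edge of colour `k`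
if `k < m`, an arc of colour `k - m` from `A` to `B` if `m ≤ k < m + n`, and an arc of colour
`k - (m+n)` from `B` to `A` otherwise. -/
def factorType (m n : ℕ) (k : Fin (m + 2*n)) : AdjType m n :=
  if h : (k : ℕ) < m then .edge ⟨k, h⟩
  else if h' : (k : ℕ) < m + n then .fwd ⟨(k : ℕ) - m, by omega⟩
  else .bwd ⟨(k : ℕ) - (m + n), by have := k.isLt; omega⟩

/-- The member of the family `H_{c,c}` (where `c = m + 2n`) determined by the 1-factorization
`F` of `K_{c,c}`: vertex set `A ⊕ B`, with `a_s` and `b_t` joined according to the 1-factor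
containing the edge `a_s b_t`. -/
def Hgraph (m n : ℕ) (F : Fin (m+2*n) → Fin (m+2*n) → Fin (m+2*n)) :
    MixedGraph (Fin (m+2*n) ⊕ Fin (m+2*n)) m n where
  typ x y :=
    match x, y with
    | Sum.inl s, Sum.inr t => some (factorType m n (F s t))
    | Sum.inr t, Sum.inl s => some (AdjType.flip (factorType m n (F s t)))
    | _, _ => none
  typ_irrefl v := by cases v <;> rfl
  typ_flip u v := by
    cases u <;> cases v <;> simp [AdjType.flip_flip]

/-- Vertices of members of the family `Z_{m,n,q}` (with `c = m + 2n`): pairs consisting of an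
index `i` and a tuple of values in `{1, …, c}` indexed by the coordinates other than `i`. -/
abbrev ZVert (q c : ℕ) : Type := Σ i : Fin q, ({j : Fin q // j ≠ i} → Fin c)

/-- The member of the family `Z_{m,n,q}` determined by the member of `H_{c,c}` encoded by the
1-factorization `F`: vertices `v` (index `i`) and `w` (index `j`) with `i < j` are joined the
way `a_s` and `b_t` are joined in `H`, where `s = v_j` and `t = w_i`; vertices with equal
index are nonadjacent. -/
def Zgraph (m n q : ℕ) (F : Fin (m+2*n) → Fin (m+2*n) → Fin (m+2*n)) :
    MixedGraph (ZVert q (m+2*n)) m n where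
  typ v w :=
    if h : v.1 < w.1 then
      some (factorType m n
        (F (v.2 ⟨w.1, Ne.symm (ne_of_lt h)⟩) (w.2 ⟨v.1, ne_of_lt h⟩)))
    else if h' : w.1 < v.1 then
      some (AdjType.flip (factorType m n
        (F (w.2 ⟨v.1, Ne.symm (ne_of_lt h')⟩) (v.2 ⟨w.1, ne_of_lt h'⟩))))
    else none
  typ_irrefl v := by simp
  typ_flip u v := by
    try dsimp only
    rcases lt_trichotomy u.1 v.1 with h | h | h
    · rw [dif_pos h, dif_neg (asymm h), dif_pos h]
      simp [AdjType.flip_flip]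
    · simp [h, lt_irrefl]
    · rw [dif_neg (asymm h), dif_pos h, dif_pos h]
      simp

/-!
The graph is a blow-up of the member of `Z_{m,n,k+2}` built from the cyclic Latin square
`(s, t) ↦ s + t` on `Fin (m+2n)`: every `a < k²` contributes one copy of each vertex of index
`a mod (k+2)`, so each index has at most `k - 1` copies. Vertices of equal index are
nonadjacent, so a clique has distinct indices, and for an index `r` it misses, the Latin
property lets one choose the coordinates of a vertex of index `r` independently, one per clique
vertex, to realise any prescribed adjacency types. A clique of size `i` meets at most `i`
indices, so at least `k² - i(k-1) ≥ (k-i)(k-1) + 1` values of `a` have an index it misses, and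
each of them yields a distinct witness.
-/

open Finset

theorem factorType_surjective (m n : ℕ) : Function.Surjective (factorType m n) := by
  rintro (i | j | j)
  · exact ⟨⟨i, by omega⟩, by simp [factorType]⟩
  · exact ⟨⟨m + j, by omega⟩, by simp [factorType]⟩
  · exact ⟨⟨m + n + j, by omega⟩, by simp [factorType, show ¬ m + n + (j : ℕ) < m by omega]⟩

theorem isLatin_add (c : ℕ) [NeZero c] : IsLatin fun s t : Fin c => s + t :=
  ⟨fun s => (Equiv.addLeft s).bijective, fun t => (Equiv.addRight t).bijective⟩

namespace MixedGraph

variable {V W : Type} {m n : ℕ}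

def comap (G : MixedGraph W m n) (f : V → W) : MixedGraph V m n where
  typ x y := G.typ (f x) (f y)
  typ_irrefl v := G.typ_irrefl (f v)
  typ_flip u v := G.typ_flip (f u) (f v)

end MixedGraph

namespace Zgraph

variable {m n q : ℕ} {F : Fin (m+2*n) → Fin (m+2*n) → Fin (m+2*n)}

theorem fst_ne_of_adj {v w : ZVert q (m+2*n)} (h : (Zgraph m n q F).Adj v w) : v.1 ≠ w.1 := by
  intro hvw
  simp [MixedGraph.Adj, Zgraph, hvw] at h

theorem exists_coord_typ_eq (hF : IsLatin F) {r : Fin q} (v : ZVert q (m+2*n)) (hv : v.1 ≠ r)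
    (t : AdjType m n) :
    ∃ s, ∀ g : {j // j ≠ r} → Fin (m+2*n), g ⟨v.1, hv⟩ = s →
      (Zgraph m n q F).typ ⟨r, g⟩ v = some t := by
  rcases lt_or_gt_of_ne hv with hlt | hgt
  · obtain ⟨u, hu⟩ := factorType_surjective m n t.flip
    obtain ⟨s, hs⟩ := (hF.1 (v.2 ⟨r, hv.symm⟩)).2 u
    refine ⟨s, fun g hg => ?_⟩
    simp [Zgraph, hlt, not_lt_of_gt hlt, hg, hs, hu, AdjType.flip_flip]
  · obtain ⟨u, hu⟩ := factorType_surjective m n t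
    obtain ⟨s, hs⟩ := (hF.2 (v.2 ⟨r, hv.symm⟩)).2 u
    refine ⟨s, fun g hg => ?_⟩
    simp [Zgraph, hgt, hg, hs, hu]

theorem exists_typ_eq [NeZero (m+2*n)] (hF : IsLatin F) {κ : Type*} (w : κ → ZVert q (m+2*n))
    (hw : Function.Injective fun i => (w i).1) {r : Fin q} (hr : ∀ i, (w i).1 ≠ r)
    (L : κ → AdjType m n) :
    ∃ g, ∀ i, (Zgraph m n q F).typ ⟨r, g⟩ (w i) = some (L i) := by
  classical
  choose s hs using fun i => exists_coord_typ_eq hF (w i) (hr i) (L i)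
  refine ⟨fun j => if h : ∃ i, (w i).1 = j.1 then s h.choose else 0, fun i => hs i _ ?_⟩
  have hex : ∃ i', (w i').1 = (w i).1 := ⟨i, rfl⟩
  rw [dif_pos hex, hw hex.choose_spec]

theorem hasPropP_comap [NeZero (m+2*n)] (hF : IsLatin F) {V : Type} [Fintype V]
    (π : V → ZVert q (m+2*n)) {a b : ℕ}
    (hπ : ∀ R : Finset (Fin q), #R ≤ a → ∀ g : (r : Fin q) → {j // j ≠ r} → Fin (m+2*n),
      b ≤ {x | (π x).1 ∉ R ∧ (π x).2 = g (π x).1}.ncard) :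
    ((Zgraph m n q F).comap π).HasPropP a b := by
  classical
  intro X hX hcl L
  set R := X.image fun x => (π x).1
  have hinj : Function.Injective fun v : X => (π v).1 := by
    intro u v huv
    by_contra hne
    exact fst_ne_of_adj (hcl u u.2 v v.2 (Subtype.coe_ne_coe.2 hne)) huv
  have hext : ∀ r, ∃ g : {j // j ≠ r} → Fin (m+2*n), r ∉ R →
      ∀ v : X, (Zgraph m n q F).typ ⟨r, g⟩ (π v) = some (L v) := by
    intro r
    by_cases hr : r ∈ R
    · exact ⟨fun _ => 0, fun h => absurd hr h⟩
    · obtain ⟨g, hg⟩ := exists_typ_eq hF (fun v : X => π v) hinj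
        (fun v hv => hr (mem_image.2 ⟨v, v.2, hv⟩)) L
      exact ⟨g, fun _ => hg⟩
  choose g hg using hext
  refine (hπ R (card_image_le.trans hX) g).trans (Set.ncard_le_ncard ?_ (Set.toFinite _))
  rintro x ⟨hxR, hxg⟩ v
  have hx : π x = ⟨(π x).1, g (π x).1⟩ := Sigma.ext rfl (heq_of_eq hxg)
  show (Zgraph m n q F).typ (π x) (π v) = _
  rw [hx]
  exact hg _ hxR v

end Zgraph

theorem card_le_ncard_blowup {A V : Type} [Fintype A] {q c : ℕ} (ι : A → Fin q)
    (e : V ≃ Σ a, ({j // j ≠ ι a} → Fin c)) (R : Finset (Fin q))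
    (g : (r : Fin q) → {j // j ≠ r} → Fin c) :
    #{a | ι a ∉ R} ≤ {x : V | ι (e x).1 ∉ R ∧ (e x).2 = g (ι (e x).1)}.ncard := by
  have : Finite V := .of_equiv _ e.symm
  rw [← Set.ncard_coe_finset]
  refine Set.ncard_le_ncard_of_injOn (fun a => e.symm ⟨a, g (ι a)⟩) ?_ ?_ (Set.toFinite _)
  · intro a ha
    rw [Set.mem_ofPred_eq, Equiv.apply_symm_apply]
    exact ⟨by simpa using ha, rfl⟩
  · intro a _ b _ h
    simpa using congrArg (fun x => (e x).1) h

theorem card_filter_mod_eq_le {N p d : ℕ} (hN : N ≤ p * d) (r : ℕ) :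
    #{a : Fin N | a % p = r} ≤ d := by
  calc #{a : Fin N | a % p = r} ≤ #(range d) := by
        refine card_le_card_of_injOn (fun a => a / p) ?_ ?_
        · intro a _
          simpa using Nat.div_lt_of_lt_mul (a.2.trans_le hN)
        · intro a ha b hb (hab : a / p = b / p)
          simp only [coe_filter, mem_univ, true_and, Set.mem_ofPred_eq] at ha hb
          exact Fin.ext (by rw [← Nat.div_add_mod a p, ← Nat.div_add_mod b p, ha, hb, hab])
    _ = d := card_range d

theorem card_sub_mul_le_card_filter_notMem {A B : Type*} [Fintype A] [DecidableEq B]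
    {ι : A → B} {d : ℕ} (hd : ∀ b, #{a | ι a = b} ≤ d) (R : Finset B) :
    Fintype.card A - d * #R ≤ #{a | ι a ∉ R} := by
  have hin : #{a | ι a ∈ R} ≤ d * #R :=
    card_le_mul_card_image_of_maps_to (f := ι) (by simp) d fun b _ =>
      (card_le_card (by intro a; simp +contextual)).trans (hd b)
  have := card_filter_add_card_filter_not (s := univ) (fun a => ι a ∈ R)
  rw [card_univ] at this
  omega

theorem card_filter_ofNat_eq_le {k : ℕ} (hk : 2 ≤ k) (r : Fin (k+2)) :
    #{a : Fin (k^2) | Fin.ofNat (k+2) a = r} ≤ k - 1 := by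
  have hsq : k^2 ≤ (k+2) * (k-1) := by
    obtain ⟨j, rfl⟩ : ∃ j, k = j + 1 := ⟨k - 1, by omega⟩
    simp only [Nat.add_sub_cancel]
    nlinarith
  refine (card_le_card fun a ha => ?_).trans (card_filter_mod_eq_le hsq r)
  simp only [mem_filter, mem_univ, true_and] at ha ⊢
  rw [← ha, Fin.val_ofNat]

theorem mul_pred_add_one_le_sub {k i j : ℕ} (hk : 1 ≤ k) (hik : i ≤ k) (hj : j ≤ i) :
    (k - i) * (k - 1) + 1 ≤ k^2 - (k - 1) * j := by
  have h1 : (k - i) * (k - 1) + (k - 1) * i = k * (k - 1) := by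
    rw [mul_comm (k - 1), ← add_mul, Nat.sub_add_cancel hik]
  have h2 : k * (k - 1) + 1 ≤ k^2 := by
    obtain ⟨l, rfl⟩ : ∃ l, k = l + 1 := ⟨k - 1, by omega⟩
    simp only [Nat.add_sub_cancel]
    nlinarith
  have h3 : (k - 1) * j ≤ (k - 1) * i := Nat.mul_le_mul_left _ hj
  omega

/-- For all k ≥ 4 and m + 2n ≥ 3, there is an `(m,n)`-coloured mixed graph on
exactly `t = k²·(m+2n)^(k+1)` vertices with Property `P_{i,(k-i)(k-1)+1}` for i = 1, …, k. -/
theorem stmt3 (m n k : ℕ) (hk : 4 ≤ k) (hc : 3 ≤ m + 2*n) :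
    ∃ H : MixedGraph (Fin (k^2 * (m + 2*n)^(k+1))) m n,
      ∀ i : ℕ, 1 ≤ i → i ≤ k → H.HasPropP i ((k - i)*(k - 1) + 1) := by
  have : NeZero (m + 2*n) := ⟨by omega⟩
  let ι : Fin (k^2) → Fin (k+2) := fun a => Fin.ofNat (k+2) a
  let e : Fin (k^2 * (m + 2*n)^(k+1)) ≃ Σ a, ({j // j ≠ ι a} → Fin (m + 2*n)) :=
    (Fintype.equivFinOfCardEq (by simp [Fintype.card_sigma])).symm
  refine ⟨(Zgraph m n (k+2) (· + ·)).comap fun x => ⟨ι (e x).1, (e x).2⟩, fun i _ hik => ?_⟩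
  refine Zgraph.hasPropP_comap (isLatin_add _) _ fun R hR g => ?_
  calc (k - i) * (k - 1) + 1 ≤ Fintype.card (Fin (k^2)) - (k - 1) * #R := by
        simpa using mul_pred_add_one_le_sub (by omega) hik hR
    _ ≤ #{a | ι a ∉ R} :=
        card_sub_mul_le_card_filter_notMem (card_filter_ofNat_eq_le (by omega)) R
    _ ≤ _ := card_le_ncard_blowup ι e R g
end

section
/- For all integers k ≥ 4, c ≥ 3, and 1 ≤ i ≤ k, setting t = k²·c^{k+1}, the binomial tail sum satisfies Σ_{j=0}^{(k-i)(k-1)} C(t-i, j)·(c^{-i})^j·(1 - c^{-i})^{(t-i)-j} < e^{-t·c^{-i}} · t^{(k-i)(k-1)+1}, where the sum and both sides are real numbers. -/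
/-!
Bound each binomial term by `C(n, j) ≤ n^j` and `1 - p ≤ e^{-p}`: with `n = t - i` the `j`-th
term is at most `(p e^p)^j · n^j · e^{p i} · e^{-p t}`. For `p = c^{-i}` we have `p e^p ≤ 1` and
`p i ≤ 1`, so every term is at most `e · t^m · e^{-p t}` where `m = (k - i)(k - 1)`, and the
`m + 1` terms together stay below `t^{m+1} e^{-p t}` because `e (m + 1) ≤ 3 k² < t`.
-/

open Real Finset

lemma mul_exp_le_one {p : ℝ} (hp0 : 0 ≤ p) (hp : p ≤ 1 / 2) : p * exp p ≤ 1 := by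
  have hexp : exp p ≤ 1 / (1 - p) := exp_bound_div_one_sub_of_interval hp0 (by linarith)
  calc p * exp p ≤ p * (1 / (1 - p)) := by gcongr
    _ ≤ 1 := by rw [mul_one_div, div_le_one (by linarith)]; linarith

lemma choose_mul_pow_mul_one_sub_pow_le (n j : ℕ) {p : ℝ} (hp0 : 0 ≤ p) (hp1 : p ≤ 1) :
    (n.choose j : ℝ) * p ^ j * (1 - p) ^ (n - j) ≤ (n * (p * exp p)) ^ j * exp (-p * n) := by
  rcases lt_or_ge n j with hnj | hjn
  · rw [Nat.choose_eq_zero_of_lt hnj, Nat.cast_zero, zero_mul, zero_mul]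
    positivity
  have hchoose : (n.choose j : ℝ) ≤ (n : ℝ) ^ j := by exact_mod_cast Nat.choose_le_pow n j
  have hpow : (1 - p) ^ (n - j) ≤ exp (-p) ^ (n - j) :=
    pow_le_pow_left₀ (by linarith) (one_sub_le_exp_neg p) _
  have hexp : exp (-p) ^ (n - j) = exp p ^ j * exp (-p * n) := by
    rw [← exp_nat_mul, ← exp_nat_mul, ← exp_add, Nat.cast_sub hjn]
    ring_nf
  calc (n.choose j : ℝ) * p ^ j * (1 - p) ^ (n - j)
      ≤ (n : ℝ) ^ j * p ^ j * exp (-p) ^ (n - j) := by gcongr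
    _ = (n * (p * exp p)) ^ j * exp (-p * n) := by rw [hexp]; ring

lemma sum_range_choose_mul_pow_mul_one_sub_pow_le {n m T : ℕ} (hT : 1 ≤ T) (hnT : n ≤ T)
    {p : ℝ} (hp0 : 0 ≤ p) (hp : p ≤ 1 / 2) :
    ∑ j ∈ range (m + 1), (n.choose j : ℝ) * p ^ j * (1 - p) ^ (n - j)
      ≤ (m + 1) * ((T : ℝ) ^ m * exp (-p * n)) := by
  have hterm : ∀ j ∈ range (m + 1),
      (n.choose j : ℝ) * p ^ j * (1 - p) ^ (n - j) ≤ (T : ℝ) ^ m * exp (-p * n) := by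
    intro j hj
    have hjm : j ≤ m := Nat.lt_succ_iff.mp (mem_range.mp hj)
    calc (n.choose j : ℝ) * p ^ j * (1 - p) ^ (n - j)
        ≤ (n * (p * exp p)) ^ j * exp (-p * n) :=
          choose_mul_pow_mul_one_sub_pow_le n j hp0 (by linarith)
      _ ≤ (T : ℝ) ^ m * exp (-p * n) := by
          gcongr
          calc (n * (p * exp p)) ^ j ≤ (T : ℝ) ^ j := by
                gcongr
                calc (n : ℝ) * (p * exp p) ≤ n * 1 := by gcongr; exact mul_exp_le_one hp0 hp
                  _ ≤ T := by rw [mul_one]; exact_mod_cast hnT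
            _ ≤ (T : ℝ) ^ m := pow_le_pow_right₀ (by exact_mod_cast hT) hjm
  simpa using sum_le_card_nsmul _ _ _ hterm

lemma exp_neg_mul_natCast_sub_le (t i : ℕ) {p : ℝ} (hp0 : 0 ≤ p) :
    exp (-p * ((t - i : ℕ) : ℝ)) ≤ exp (p * i) * exp (-t * p) := by
  have hsub : (t : ℝ) ≤ ((t - i : ℕ) : ℝ) + i := by exact_mod_cast le_tsub_add
  rw [← exp_add, exp_le_exp]
  nlinarith

lemma three_mul_succ_lt {k c i : ℕ} (hk : 1 ≤ k) (hc : 2 ≤ c) :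
    3 * ((k - i) * (k - 1) + 1) < k ^ 2 * c ^ (k + 1) := by
  have hm : (k - i) * (k - 1) + 1 ≤ k ^ 2 := by
    calc (k - i) * (k - 1) + 1 ≤ k * (k - 1) + 1 := by gcongr; omega
      _ ≤ k ^ 2 := by cases k with
        | zero => omega
        | succ k => simp only [Nat.add_sub_cancel]; nlinarith
  have hck : 4 ≤ c ^ (k + 1) :=
    calc 4 = 2 ^ 2 := by norm_num
      _ ≤ 2 ^ (k + 1) := Nat.pow_le_pow_right (by norm_num) (by omega)
      _ ≤ c ^ (k + 1) := Nat.pow_le_pow_left hc _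
  nlinarith [Nat.one_le_pow 2 k hk]

theorem stmt13_general (k c i t : ℕ) (hk : 4 ≤ k) (hc : 3 ≤ c) (hi1 : 1 ≤ i)
    (ht : t = k^2 * c^(k+1)) :
    ∑ j ∈ Finset.range ((k - i)*(k - 1) + 1),
        ((t - i).choose j : ℝ) * (((c : ℝ)^i)⁻¹)^j * (1 - ((c : ℝ)^i)⁻¹)^(t - i - j)
      < Real.exp (-(t : ℝ) * ((c : ℝ)^i)⁻¹) * (t : ℝ)^((k - i)*(k - 1) + 1) := by
  set m := (k - i) * (k - 1)
  set p : ℝ := ((c : ℝ) ^ i)⁻¹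
  have hp0 : 0 ≤ p := by positivity
  have hp : p ≤ 1 / 2 := by
    rw [one_div, inv_le_inv₀ (by positivity) (by norm_num)]
    have hc3 : (3 : ℝ) ≤ c := by exact_mod_cast hc
    linarith [le_self_pow₀ (by linarith : (1 : ℝ) ≤ c) (by omega : i ≠ 0)]
  have hpi : p * i ≤ 1 := by
    rw [inv_mul_le_one₀ (by positivity)]
    exact_mod_cast (Nat.lt_pow_self (by omega)).le
  have hexp_pi : exp (p * i) ≤ 3 := (exp_le_exp.mpr hpi).trans exp_one_lt_three.le
  have hmt : 3 * ((m : ℝ) + 1) < t := by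
    rw [ht]; exact_mod_cast three_mul_succ_lt (by omega) (by omega)
  have ht1 : 1 ≤ t := by rw [ht]; exact Nat.one_le_iff_ne_zero.mpr (by positivity)
  calc _ ≤ (m + 1) * ((t : ℝ) ^ m * exp (-p * ((t - i : ℕ) : ℝ))) :=
        sum_range_choose_mul_pow_mul_one_sub_pow_le ht1 (Nat.sub_le t i) hp0 hp
    _ ≤ (m + 1) * ((t : ℝ) ^ m * (3 * exp (-t * p))) := by
        gcongr
        exact (exp_neg_mul_natCast_sub_le t i hp0).trans (by gcongr)
    _ = 3 * (m + 1) * (exp (-t * p) * (t : ℝ) ^ m) := by ring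
    _ < t * (exp (-t * p) * (t : ℝ) ^ m) := by gcongr
    _ = _ := by ring

/-- For all integers k ≥ 4, c ≥ 3 and 1 ≤ i ≤ k, with `t = k²·c^(k+1)`,
`Σ_{j=0}^{(k-i)(k-1)} C(t-i, j)·(c^{-i})^j·(1 - c^{-i})^{(t-i)-j}
  < e^{-t·c^{-i}} · t^{(k-i)(k-1)+1}`. -/
theorem stmt13 (k c i t : ℕ) (hk : 4 ≤ k) (hc : 3 ≤ c) (hi1 : 1 ≤ i) (hik : i ≤ k)
    (ht : t = k^2 * c^(k+1)) :
    ∑ j ∈ Finset.range ((k - i)*(k - 1) + 1),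
        ((t - i).choose j : ℝ) * (((c : ℝ)^i)⁻¹)^j * (1 - ((c : ℝ)^i)⁻¹)^(t - i - j)
      < Real.exp (-(t : ℝ) * ((c : ℝ)^i)⁻¹) * (t : ℝ)^((k - i)*(k - 1) + 1) :=
  stmt13_general k c i t hk hc hi1 ht
end
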